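/- arXiv:1710.04902 — 3 statements merged into one kernel-verified Lean document; each statement's English description precedes it below -/
import Mathlib

section
/- Let n ≥ 1 and for each i = 1,…,n let f_i be an increasing homeomorphism from ℝ onto an interval (a_i, b_i) ⊂ ℝ (with possibly infinite endpoints). Assume a_i > −∞ for at least one i and b_j < +∞ for at least one j. For t ∈ ℝ let F_t = τ_t∘f_n∘⋯∘τ_t∘f_1, where τ_t(x) = x+t. Then there exists a subset N ⊂ ℝ of finite Lebesgue measure, a countable union of closed intervals, such that for all t ∉ N the map F_t admits a unique fixed point in ℝ. -/
open Set Function Filter MeasureTheory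

/-- An orientation-preserving homeomorphism of `ℝ` commuting with `x ↦ x + 1`,
i.e. a lift of an orientation-preserving circle homeomorphism. -/
structure HomeoZR : Type where
  toFun : ℝ → ℝ
  invFun : ℝ → ℝ
  left_inv : Function.LeftInverse invFun toFun
  right_inv : Function.RightInverse invFun toFun
  strictMono : StrictMono toFun
  map_add_one : ∀ x, toFun (x + 1) = toFun x + 1

namespace HomeoZR

/-- The identity. -/
protected def id : HomeoZR :=
  ⟨_root_.id, _root_.id, fun _ => rfl, fun _ => rfl, strictMono_id, fun _ => rfl⟩

/-- Composition `f ∘ g`. -/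
protected def comp (f g : HomeoZR) : HomeoZR where
  toFun := f.toFun ∘ g.toFun
  invFun := g.invFun ∘ f.invFun
  left_inv := fun x => by
    show g.invFun (f.invFun (f.toFun (g.toFun x))) = x
    rw [f.left_inv, g.left_inv]
  right_inv := fun x => by
    show f.toFun (g.toFun (g.invFun (f.invFun x))) = x
    rw [g.right_inv, f.right_inv]
  strictMono := f.strictMono.comp g.strictMono
  map_add_one := fun x => by
    show f.toFun (g.toFun (x + 1)) = f.toFun (g.toFun x) + 1
    rw [g.map_add_one, f.map_add_one]

/-- Inverse. -/
protected def symm (f : HomeoZR) : HomeoZR where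
  toFun := f.invFun
  invFun := f.toFun
  left_inv := f.right_inv
  right_inv := f.left_inv
  strictMono := by
    intro x y hxy
    rcases lt_trichotomy (f.invFun x) (f.invFun y) with h | h | h
    · exact h
    · exact absurd (by rw [← f.right_inv x, ← f.right_inv y, h]) (ne_of_lt hxy)
    · have h2 := f.strictMono h
      rw [f.right_inv, f.right_inv] at h2
      exact absurd h2 (lt_asymm hxy)
  map_add_one := fun x => by
    have h1 : f.invFun (f.toFun (f.invFun x + 1)) = f.invFun (x + 1) := by
      rw [f.map_add_one, f.right_inv]
    rw [f.left_inv] at h1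
    exact h1.symm

/-- The associated monotone degree-one lift. -/
def toLift (f : HomeoZR) : CircleDeg1Lift :=
  ⟨⟨f.toFun, f.strictMono.monotone⟩, f.map_add_one⟩

/-- The translation number `rot̃(f)`. -/
noncomputable def transNum (f : HomeoZR) : ℝ :=
  f.toLift.translationNumber

/-- The canonical lift of the underlying circle homeomorphism: the lift whose
translation number lies in `[0,1)`, as a plain function. -/
noncomputable def canon (f : HomeoZR) : ℝ → ℝ :=
  fun x => f.toFun x - (⌊f.transNum⌋ : ℝ)

/-- The periodic points of the underlying circle homeomorphism, as a
`ℤ`-periodic subset of `ℝ`. -/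
def Per (f : HomeoZR) : Set ℝ :=
  {x | ∃ n : ℕ, 0 < n ∧ ∃ m : ℤ, f.toFun^[n] x = x + m}

/-- The fixed points of the underlying circle homeomorphism, as a subset of `ℝ`. -/
def FixS (f : HomeoZR) : Set ℝ :=
  {x | ∃ m : ℤ, f.toFun x = x + m}

/-- `q(f)`: the minimal period of the underlying circle homeomorphism. -/
noncomputable def q (f : HomeoZR) : ℕ :=
  sInf {n : ℕ | 0 < n ∧ ∃ x : ℝ, ∃ m : ℤ, f.toFun^[n] x = x + m}

/-- `p(f)`: the least `p ≥ 0` with `rot(f) = p / q(f)` mod `ℤ`. -/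
noncomputable def p (f : HomeoZR) : ℕ :=
  sInf {p : ℕ | ∃ m : ℤ, f.transNum = (p : ℝ) / (f.q : ℝ) + (m : ℝ)}

/-- Natural powers. -/
protected def npow (f : HomeoZR) : ℕ → HomeoZR
  | 0 => HomeoZR.id
  | n + 1 => (f.npow n).comp f

/-- Integer powers. -/
protected def zpow (f : HomeoZR) (k : ℤ) : HomeoZR :=
  if 0 ≤ k then f.npow k.toNat else f.symm.npow (-k).toNat

end HomeoZR

/-- `f` has rational rotation number. -/
def RatRot (f : HomeoZR) : Prop := ∃ r : ℚ, f.transNum = (r : ℝ)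

/-- `F` is a positive one-parameter family (one-parameter group) commuting with `f`:
for `t ≠ 0` the fixed set of `F t` is the frontier of `Per f`, and for `t > 0` the
canonical lift of `F t` moves every point off the frontier strictly to the right. -/
def PosFamily (f : HomeoZR) (F : ℝ → HomeoZR) : Prop :=
  (∀ s t, (F (s + t)).toFun = (F s).toFun ∘ (F t).toFun) ∧
  (∀ t, (F t).toFun ∘ f.toFun = f.toFun ∘ (F t).toFun) ∧
  (∀ t, t ≠ 0 → (F t).FixS = frontier f.Per) ∧
  (∀ t, 0 < t → ∀ x, x ∉ frontier f.Per → x < (F t).canon x)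

/-- `δ_{f,g}(x,t)`, where `F` is a positive one-parameter family commuting with `f`. -/
noncomputable def delta (F : ℝ → HomeoZR) (g : HomeoZR) (x t : ℝ) : ℝ :=
  ((F t).canon ∘ g.canon)^[g.q] x - x - (g.p : ℝ)

/-- Persistent periodic points. -/
def Pset (F : ℝ → HomeoZR) (g : HomeoZR) : Set ℝ := {x | ∀ t, delta F g x t = 0}

/-- Never-periodic points. -/
def Nset (F : ℝ → HomeoZR) (g : HomeoZR) : Set ℝ := {x | ∀ t, delta F g x t ≠ 0}

/-- Points periodic at a unique time. -/
def Uset (F : ℝ → HomeoZR) (g : HomeoZR) : Set ℝ := {x | ∃! t, delta F g x t = 0}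

/-- `x` has a finite orbit in the circle under the group generated by `f` and `g`. -/
def FiniteOrbit (f g : HomeoZR) (x : ℝ) : Prop :=
  ∃ S : Set ℝ, S.Finite ∧ x ∈ S ∧
    (∀ y ∈ S, ∃ z ∈ S, ∃ m : ℤ, f.toFun y = z + m) ∧
    (∀ y ∈ S, ∃ z ∈ S, ∃ m : ℤ, g.toFun y = z + m)

/-- `τ(f_1, …, f_n) = rot̃(f_n ∘ ⋯ ∘ f_1) − Σ rot̃(f_i)`. -/
noncomputable def tau (L : List HomeoZR) : ℝ :=
  (L.foldl (fun h u => u.comp h) HomeoZR.id).transNum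
    - (L.map HomeoZR.transNum).sum

/-!
Rotating the cycle so that a map `f_j` bounded above is applied last, the fixed points of `F_t`
correspond to those of `u ↦ φ t u + t`, where `φ` is nondecreasing in both variables and bounded
above. Every `u` is then a fixed point for exactly one time `t = g u`, with `g` continuous and
`u - g u = φ (g u) u` nondecreasing and bounded above, so `F_t` has several fixed points exactly
when `g` takes the value `t` twice. Up to countably many values, such a `t` is a value of `g` on
the shadow of Riesz's rising sun lemma, and on each component of the shadow `g` varies by at most
the increase of `u - g u` there; hence these values form a set of finite measure. This applies for
`t → +∞`, when the map bounded below keeps the fixed points on a half-line; `t → -∞` follows by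
the symmetry `x ↦ -x`. Finally, by outer regularity a set of finite measure lies in a countable
union of closed intervals of finite total measure.
-/

theorem exists_iUnion_Icc_superset_of_volume_lt_top {s : Set ℝ} (hs : volume s < ⊤) :
    ∃ a b : ℕ → ℝ, volume (⋃ k, Icc (a k) (b k)) < ⊤ ∧ s ⊆ ⋃ k, Icc (a k) (b k) := by
  classical
  obtain ⟨U, hsU, hU, hUfin⟩ := s.exists_isOpen_lt_of_lt ⊤ hs
  obtain ⟨e, he⟩ := exists_surjective_nat (ℚ × ℚ)
  -- intervals with rational endpoints not inside `U` are replaced by empty ones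
  let b (k : ℕ) : ℝ := if Icc ((e k).1 : ℝ) (e k).2 ⊆ U then (e k).2 else (e k).1 - 1
  have hbU : ∀ k, Icc ((e k).1 : ℝ) (b k) ⊆ U := by
    intro k
    by_cases h : Icc ((e k).1 : ℝ) (e k).2 ⊆ U <;> simp [b, h]
  refine ⟨fun k => (e k).1, b, (measure_mono (iUnion_subset hbU)).trans_lt hUfin,
    fun x hx => ?_⟩
  obtain ⟨l, u, ⟨hlx, hxu⟩, hlu⟩ := mem_nhds_iff_exists_Ioo_subset.1 (hU.mem_nhds (hsU hx))
  obtain ⟨p, hlp, hpx⟩ := exists_rat_btwn hlx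
  obtain ⟨q, hxq, hqu⟩ := exists_rat_btwn hxu
  obtain ⟨k, hk⟩ := he (p, q)
  have hpq : Icc (p : ℝ) q ⊆ U := (Icc_subset_Ioo hlp hqu).trans hlu
  exact mem_iUnion.2 ⟨k, by simp [b, hk, hpq, hpx.le, hxq.le]⟩

theorem exists_isFixedPt_of_bddBelow_of_bddAbove {F : ℝ → ℝ} (hF : Continuous F)
    (hlo : BddBelow (range F)) (hhi : BddAbove (range F)) : ∃ x, IsFixedPt F x := by
  obtain ⟨lo, hlo⟩ := hlo
  obtain ⟨hi, hhi⟩ := hhi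
  obtain ⟨x, -, hx⟩ := exists_mem_Icc_isFixedPt_of_mapsTo hF.continuousOn
    ((hlo ⟨0, rfl⟩).trans (hhi ⟨0, rfl⟩)) fun x _ => ⟨hlo ⟨x, rfl⟩, hhi ⟨x, rfl⟩⟩
  exact ⟨x, hx⟩

theorem Function.nontrivial_fixedPoints_comp_swap {α β : Type*} {f : α → β} {g : β → α}
    (h : (fixedPoints (f ∘ g)).Nontrivial) : (fixedPoints (g ∘ f)).Nontrivial := by
  have hbij := bijOn_fixedPoints_comp f g
  simpa [hbij.image_eq] using h.image_of_injOn hbij.injOn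

section OrdConnectedComponent

variable {α : Type*} [ConditionallyCompleteLinearOrder α] {s : Set α} {x : α}

theorem Set.OrdConnected.Ioc_csInf_subset (hs : s.OrdConnected) (hx : x ∈ s) :
    Ioc (sInf s) x ⊆ s := fun _ hz =>
  let ⟨_, hc, hcz⟩ := exists_lt_of_csInf_lt ⟨x, hx⟩ hz.1
  hs.out hc hx ⟨hcz.le, hz.2⟩

theorem IsOpen.csInf_ordConnectedComponent_notMem [TopologicalSpace α] [OrderTopology α]
    [DenselyOrdered α] [NoMinOrder α] (hs : IsOpen s) (hx : x ∈ s)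
    (hbdd : BddBelow (ordConnectedComponent s x)) : sInf (ordConnectedComponent s x) ∉ s := by
  set C := ordConnectedComponent s x
  intro hinf
  obtain ⟨l, hl, hls⟩ := exists_Ioc_subset_of_mem_nhds (hs.mem_nhds hinf) (exists_lt _)
  obtain ⟨y, hly, hy⟩ := exists_between hl
  have hxC : x ∈ C := self_mem_ordConnectedComponent.2 hx
  have hyx : y ≤ x := hy.le.trans (csInf_le hbdd hxC)
  have hyC : y ∈ C := by
    refine mem_ordConnectedComponent.2 fun z hz => ?_
    rw [uIcc_of_ge hyx] at hz
    rcases le_or_gt z (sInf C) with hzC | hzC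
    · exact hls ⟨hly.trans_le hz.1, hzC⟩
    · exact ordConnectedComponent_subset
        ((inferInstance : C.OrdConnected).Ioc_csInf_subset hxC ⟨hzC, hz.2⟩)
  exact (csInf_le hbdd hyC).not_gt hy

end OrdConnectedComponent

section RisingSun

variable {g : ℝ → ℝ} {a : ℝ}

/-- Riesz's shadow of the graph of `g` on `[a, ∞)`, lit from the left. -/
def shadow (g : ℝ → ℝ) (a : ℝ) : Set ℝ := {u | ∃ v, a ≤ v ∧ v < u ∧ g u < g v}

theorem shadow_subset_Ioi : shadow g a ⊆ Ioi a := fun _ ⟨_, hav, hvu, _⟩ => hav.trans_lt hvu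

theorem isOpen_shadow (hg : Continuous g) : IsOpen (shadow g a) := by
  have : shadow g a = ⋃ v ∈ Ici a, {u | v < u} ∩ {u | g u < g v} := by
    ext u; simp only [shadow, mem_ofPred_eq, mem_iUnion, mem_Ici, mem_inter_iff, exists_prop]
  rw [this]
  exact isOpen_biUnion fun v _ =>
    (isOpen_lt continuous_const continuous_id).inter (isOpen_lt hg continuous_const)

theorem countable_setOf_eq_eq_notMem_shadow :
    {t | ∃ u₁ u₂, a ≤ u₁ ∧ u₁ < u₂ ∧ g u₁ = t ∧ g u₂ = t ∧ u₂ ∉ shadow g a}.Countable := by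
  set R := {t | ∃ u₁ u₂, a ≤ u₁ ∧ u₁ < u₂ ∧ g u₁ = t ∧ g u₂ = t ∧ u₂ ∉ shadow g a}
  choose! u₁ u₂ ha h₁₂ h₁ h₂ hS using fun t (ht : t ∈ R) => ht
  have hsep : ∀ t ∈ R, ∀ t' ∈ R, t < t' → u₂ t ≤ u₁ t' := fun t ht t' ht' hlt =>
    not_lt.1 fun h => hS t ht ⟨u₁ t', ha t' ht', h, by rw [h₂ t ht, h₁ t' ht']; exact hlt⟩
  have hdisj : ∀ t ∈ R, ∀ t' ∈ R, t < t' → Disjoint (Ioo (u₁ t) (u₂ t)) (Ioo (u₁ t') (u₂ t')) :=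
    fun t ht t' ht' hlt => disjoint_left.2 fun _ hx hx' =>
      (hx.2.trans_le (hsep t ht t' ht' hlt)).not_gt hx'.1
  refine PairwiseDisjoint.countable_of_isOpen (s := fun t => Ioo (u₁ t) (u₂ t))
    (fun t ht t' ht' hne => ?_) (fun _ _ => isOpen_Ioo) fun t ht => nonempty_Ioo.2 (h₁₂ t ht)
  rcases hne.lt_or_gt with h | h
  · exact hdisj t ht t' ht' h
  · exact (hdisj t' ht' t ht h).symm

theorem apply_lt_apply_csInf_ordConnectedComponent_shadow (hg : Continuous g) {u x : ℝ}
    (hu : u ∈ shadow g a) (hx : x ∈ ordConnectedComponent (shadow g a) u) :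
    g x < g (sInf (ordConnectedComponent (shadow g a) u)) := by
  set S := shadow g a
  set C := ordConnectedComponent S u
  have hbdd : BddBelow C :=
    ⟨a, fun y hy => (shadow_subset_Ioi (ordConnectedComponent_subset hy)).le⟩
  have hinf : sInf C ∉ S := (isOpen_shadow hg).csInf_ordConnectedComponent_notMem hu hbdd
  obtain ⟨v, hav, hvx, hgv⟩ : x ∈ S := ordConnectedComponent_subset hx
  obtain ⟨m, hm, hmax⟩ := isCompact_Icc.exists_isMaxOn (nonempty_Icc.2 (hav.trans hvx.le))
    hg.continuousOn
  have hgm : g x < g m := hgv.trans_le (hmax ⟨hav, hvx.le⟩)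
  rcases le_or_gt m (sInf C) with hm' | hm'
  · refine hgm.trans_le ?_
    rcases hm'.eq_or_lt with heq | hlt
    · rw [heq]
    · exact not_lt.1 fun h => hinf ⟨m, hm.1, hlt, h⟩
  · obtain ⟨v', hav', hv'm, hlt⟩ : m ∈ S :=
      ordConnectedComponent_subset
        ((inferInstance : C.OrdConnected).Ioc_csInf_subset hx ⟨hm', hm.2⟩)
    exact absurd (hmax ⟨hav', (hv'm.trans_le hm.2).le⟩) hlt.not_ge

variable (ζ : StieltjesFunction ℝ)

theorem volume_image_ordConnectedComponent_shadow_le (hg : Continuous g)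
    (hζ : ∀ u, ζ u = u - g u) (hfin : ζ.measure (Ioi a) ≠ ⊤) (u : ℝ) :
    volume (g '' ordConnectedComponent (shadow g a) u) ≤
      ζ.measure (ordConnectedComponent (shadow g a) u) := by
  set C := ordConnectedComponent (shadow g a) u
  by_cases hu : u ∈ shadow g a
  swap
  · simp [C, ordConnectedComponent_eq_empty.2 hu]
  have hCS : C ⊆ Ioi a := ordConnectedComponent_subset.trans shadow_subset_Ioi
  have hbdd : BddBelow C := ⟨a, fun y hy => (hCS hy).le⟩
  have hCfin : ζ.measure C ≠ ⊤ := ne_top_of_le_ne_top hfin (measure_mono hCS)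
  set α := sInf C
  -- on `C`, `g` drops below `g α` by at most the increase of `ζ = id - g`
  have himage : g '' C ⊆ Ico (g α - (ζ.measure C).toReal) (g α) := by
    rintro _ ⟨x, hx, rfl⟩
    refine ⟨?_, apply_lt_apply_csInf_ordConnectedComponent_shadow hg hu hx⟩
    have hαx : α ≤ x := csInf_le hbdd hx
    have hinc : ζ x - ζ α ≤ (ζ.measure C).toReal := by
      rw [← ENNReal.toReal_ofReal (sub_nonneg.2 (ζ.mono hαx)), ← ζ.measure_Ioc]
      exact ENNReal.toReal_mono hCfin
        (measure_mono ((inferInstance : C.OrdConnected).Ioc_csInf_subset hx))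
    rw [hζ, hζ] at hinc
    linarith
  calc volume (g '' C)
      ≤ volume (Ico (g α - (ζ.measure C).toReal) (g α)) := measure_mono himage
    _ = ζ.measure C := by rw [Real.volume_Ico, sub_sub_cancel, ENNReal.ofReal_toReal hCfin]

theorem volume_image_shadow_le (hg : Continuous g) (hζ : ∀ u, ζ u = u - g u)
    (hfin : ζ.measure (Ioi a) ≠ ⊤) : volume (g '' shadow g a) ≤ ζ.measure (shadow g a) := by
  set S := shadow g a
  set 𝒞 : Set (Set ℝ) := range fun q : ℚ => ordConnectedComponent S q
  have h𝒞 : 𝒞.Countable := countable_range _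
  have hS : S = ⋃₀ 𝒞 := by
    refine subset_antisymm (fun u hu => ?_)
      (sUnion_subset fun C ⟨q, hq⟩ => hq ▸ ordConnectedComponent_subset)
    obtain ⟨l, r, hlr, hS'⟩ := mem_nhds_iff_exists_Ioo_subset.1 ((isOpen_shadow hg).mem_nhds hu)
    obtain ⟨q, hlq, hqr⟩ := exists_rat_btwn (hlr.1.trans hlr.2)
    have hqu : uIcc (q : ℝ) u ⊆ S :=
      ((ordConnected_Ioo).uIcc_subset ⟨hlq, hqr⟩ hlr).trans hS'
    exact mem_sUnion_of_mem (mem_ordConnectedComponent.2 hqu) ⟨q, rfl⟩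
  have hdisj : 𝒞.Pairwise Disjoint := by
    rintro _ ⟨q, rfl⟩ _ ⟨q', rfl⟩ hne
    refine disjoint_left.2 fun z hz hz' => hne ?_
    exact (ordConnectedComponent_eq (mem_ordConnectedComponent.1 hz)).trans
      (ordConnectedComponent_eq (mem_ordConnectedComponent.1 hz')).symm
  calc volume (g '' S) = volume (⋃ C ∈ 𝒞, g '' C) := by rw [hS, image_sUnion, sUnion_image]
    _ ≤ ∑' C : 𝒞, volume (g '' C) := measure_biUnion_le _ h𝒞 _
    _ ≤ ∑' C : 𝒞, ζ.measure C := ENNReal.tsum_le_tsum fun ⟨_, q, hq⟩ =>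
        hq ▸ volume_image_ordConnectedComponent_shadow_le ζ hg hζ hfin q
    _ = ζ.measure S := by
        rw [hS, measure_sUnion h𝒞 hdisj fun C ⟨q, hq⟩ =>
          hq ▸ (inferInstance : OrdConnected _).measurableSet]

end RisingSun

theorem volume_setOf_eq_eq_lt_top {g : ℝ → ℝ} (hg : Continuous g)
    (hmono : Monotone fun u => u - g u) (hbdd : BddAbove (range fun u => u - g u)) (a : ℝ) :
    volume {t | ∃ u₁ u₂, a ≤ u₁ ∧ u₁ < u₂ ∧ g u₁ = t ∧ g u₂ = t} < ⊤ := by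
  let ζ : StieltjesFunction ℝ :=
    ⟨fun u => u - g u, hmono, fun _ => (continuous_id.sub hg).continuousWithinAt⟩
  have hfin : ζ.measure (Ioi a) ≠ ⊤ := by
    rw [ζ.measure_Ioi (tendsto_atTop_ciSup hmono hbdd)]
    exact ENNReal.ofReal_ne_top
  have hsub : {t | ∃ u₁ u₂, a ≤ u₁ ∧ u₁ < u₂ ∧ g u₁ = t ∧ g u₂ = t} ⊆
      g '' shadow g a ∪
        {t | ∃ u₁ u₂, a ≤ u₁ ∧ u₁ < u₂ ∧ g u₁ = t ∧ g u₂ = t ∧ u₂ ∉ shadow g a} := by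
    rintro t ⟨u₁, u₂, ha, h₁₂, h₁, h₂⟩
    by_cases hS : u₂ ∈ shadow g a
    · exact Or.inl ⟨u₂, hS, h₂⟩
    · exact Or.inr ⟨u₁, u₂, ha, h₁₂, h₁, h₂, hS⟩
  calc volume {t | ∃ u₁ u₂, a ≤ u₁ ∧ u₁ < u₂ ∧ g u₁ = t ∧ g u₂ = t}
      ≤ volume (g '' shadow g a) := by
        refine (measure_mono hsub).trans ((measure_union_le _ _).trans_eq ?_)
        rw [countable_setOf_eq_eq_notMem_shadow.measure_zero, add_zero]
    _ ≤ ζ.measure (shadow g a) := volume_image_shadow_le ζ hg (fun _ => rfl) hfin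
    _ ≤ ζ.measure (Ioi a) := measure_mono shadow_subset_Ioi
    _ < ⊤ := hfin.lt_top

section FixedTime

variable {φ : ℝ → ℝ → ℝ} {B : ℝ}

theorem exists_continuous_fixedTime (hmono : Monotone (uncurry φ))
    (hcont : Continuous (uncurry φ)) (hB : ∀ t u, φ t u ≤ B) (hlow : ∀ u, ∃ t, u ≤ φ t u + t) :
    ∃ g : ℝ → ℝ, Continuous g ∧ ∀ t u, φ t u + t = u ↔ g u = t := by
  have hstrict : ∀ u, StrictMono fun t => φ t u + t := fun u t t' h =>
    add_lt_add_of_le_of_lt (hmono (show (t, u) ≤ (t', u) from ⟨h.le, le_rfl⟩)) h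
  have hex : ∀ u, ∃ t, φ t u + t = u := by
    intro u
    obtain ⟨t, ht⟩ := hlow u
    have hcont_t : Continuous fun t => φ t u + t :=
      (hcont.comp (continuous_id.prodMk continuous_const)).add continuous_id
    have h₀ : φ (u - B) u + (u - B) ≤ u := by linarith [hB (u - B) u]
    obtain ⟨t, -, ht⟩ := intermediate_value_uIcc hcont_t.continuousOn (mem_uIcc_of_le h₀ ht)
    exact ⟨t, ht⟩
  choose g hg using hex
  have hiff : ∀ t u, φ t u + t = u ↔ g u = t := fun t u =>
    ⟨fun h => (hstrict u).injective ((hg u).trans h.symm), fun h => h ▸ hg u⟩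
  have hcont_u : ∀ t, Continuous fun u => φ t u + t := fun t =>
    (hcont.comp (continuous_const.prodMk continuous_id)).add continuous_const
  refine ⟨g, OrderTopology.continuous_iff.2 fun c => ⟨?_, ?_⟩, hiff⟩
  · convert isOpen_lt (hcont_u c) continuous_id using 1
    ext u
    change c < g u ↔ φ c u + c < u
    rw [← (hstrict u).lt_iff_lt, hg u]
  · convert isOpen_lt continuous_id (hcont_u c) using 1
    ext u
    change g u < c ↔ u < φ c u + c
    rw [← (hstrict u).lt_iff_lt, hg u]

theorem exists_volume_setOf_nontrivial_fixedPoints_lt_top (hmono : Monotone (uncurry φ))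
    (hcont : Continuous (uncurry φ)) (hB : ∀ t u, φ t u ≤ B)
    (hlow : ∀ c, ∀ᶠ t in atTop, ∀ u, c ≤ φ t u + t) :
    ∃ T, volume {t | T ≤ t ∧ (fixedPoints fun u => φ t u + t).Nontrivial} < ⊤ := by
  obtain ⟨g, hg, hgφ⟩ := exists_continuous_fixedTime hmono hcont hB fun u =>
    let ⟨t, ht⟩ := (hlow u).exists; ⟨t, ht u⟩
  have hζ : ∀ u, u - g u = φ (g u) u := fun u => by linarith [(hgφ (g u) u).2 rfl]
  have hζmono : Monotone fun u => u - g u := by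
    intro p r hpr
    rcases le_or_gt (g p) (g r) with h | h
    · simp only [hζ]
      exact hmono (show (g p, p) ≤ (g r, r) from ⟨h, hpr⟩)
    · dsimp only
      linarith
  have hζbdd : BddAbove (range fun u => u - g u) :=
    ⟨B, by rintro _ ⟨u, rfl⟩; simp only [hζ, hB]⟩
  obtain ⟨T, hT⟩ := eventually_atTop.1 (hlow 0)
  refine ⟨T, (measure_mono ?_).trans_lt (volume_setOf_eq_eq_lt_top hg hζmono hζbdd 0)⟩
  rintro t ⟨hTt, x, hx, y, hy, hxy⟩
  have hfix : ∀ u, φ t u + t = u → 0 ≤ u ∧ g u = t := fun u hu =>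
    ⟨hu ▸ hT t hTt u, (hgφ t u).1 hu⟩
  obtain ⟨hx0, hgx⟩ := hfix x hx
  obtain ⟨hy0, hgy⟩ := hfix y hy
  rcases hxy.lt_or_gt with h | h
  · exact ⟨x, y, hx0, h, hgx, hgy⟩
  · exact ⟨y, x, hy0, h, hgy, hgx⟩

end FixedTime

/-- `shiftedComp [f₁, …, fₙ] t = τ_t ∘ fₙ ∘ ⋯ ∘ τ_t ∘ f₁`, with `τ_t x = x + t`. -/
def shiftedComp (L : List (ℝ → ℝ)) (t : ℝ) : ℝ → ℝ :=
  fun x => L.foldl (fun z ℓ => ℓ z + t) x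

section ShiftedComp

variable {L : List (ℝ → ℝ)} {ℓ : ℝ → ℝ} {t : ℝ}

@[simp] theorem shiftedComp_nil (t x : ℝ) : shiftedComp [] t x = x := rfl

@[simp] theorem shiftedComp_cons (ℓ : ℝ → ℝ) (L : List (ℝ → ℝ)) (t x : ℝ) :
    shiftedComp (ℓ :: L) t x = shiftedComp L t (ℓ x + t) := rfl

theorem shiftedComp_eq_foldl_map (L : List (ℝ → ℝ)) (t x : ℝ) :
    shiftedComp L t x = (L.map fun ℓ z => ℓ z + t).foldl (fun z g => g z) x := by
  rw [List.foldl_map]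
  rfl

theorem shiftedComp_append (L₁ L₂ : List (ℝ → ℝ)) (t : ℝ) :
    shiftedComp (L₁ ++ L₂) t = shiftedComp L₂ t ∘ shiftedComp L₁ t := by
  funext x
  simp [shiftedComp, List.foldl_append]

theorem shiftedComp_map_neg (L : List (ℝ → ℝ)) (t x : ℝ) :
    shiftedComp (L.map fun ℓ x => -ℓ (-x)) t x = -shiftedComp L (-t) (-x) := by
  induction L generalizing x with
  | nil => simp
  | cons ℓ L ih => simp [ih, neg_add_eq_sub, sub_eq_add_neg]

theorem monotone_shiftedComp (hL : ∀ ℓ ∈ L, Monotone ℓ) :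
    Monotone (uncurry (shiftedComp L)) := by
  induction L with
  | nil => exact fun _ _ h => h.2
  | cons ℓ L ih =>
    exact fun p q h => ih (fun ℓ' h' => hL ℓ' (List.mem_cons_of_mem _ h'))
      (show (p.1, ℓ p.2 + p.1) ≤ (q.1, ℓ q.2 + q.1) from
        ⟨h.1, add_le_add (hL ℓ List.mem_cons_self h.2) h.1⟩)

theorem monotone_shiftedComp_add (hL : ∀ ℓ ∈ L, Monotone ℓ) (t : ℝ) :
    Monotone fun y => shiftedComp L t (y + t) := fun y y' h =>
  monotone_shiftedComp hL (show (t, y + t) ≤ (t, y' + t) from ⟨le_rfl, add_le_add_left h t⟩)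

theorem continuous_shiftedComp (hL : ∀ ℓ ∈ L, Continuous ℓ) :
    Continuous (uncurry (shiftedComp L)) := by
  induction L with
  | nil => exact continuous_snd
  | cons ℓ L ih =>
    exact (ih fun ℓ' h' => hL ℓ' (List.mem_cons_of_mem _ h')).comp
      (continuous_fst.prodMk
        (((hL ℓ List.mem_cons_self).comp continuous_snd).add continuous_fst))

theorem add_le_shiftedComp (hL : ∀ ℓ ∈ L, Monotone ℓ) (ht : 0 ≤ t) (c : ℝ) :
    shiftedComp L 0 c + t ≤ shiftedComp L t (c + t) := by
  induction L generalizing c with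
  | nil => simp
  | cons ℓ L ih =>
    have hL' : ∀ ℓ' ∈ L, Monotone ℓ' := fun ℓ' h' => hL ℓ' (List.mem_cons_of_mem _ h')
    calc shiftedComp (ℓ :: L) 0 c + t = shiftedComp L 0 (ℓ c) + t := by simp
      _ ≤ shiftedComp L t (ℓ c + t) := ih hL' _
      _ ≤ shiftedComp (ℓ :: L) t (c + t) :=
        monotone_shiftedComp_add hL' t (hL ℓ List.mem_cons_self (le_add_of_nonneg_right ht))

theorem exists_range_shiftedComp_subset (hL : ∀ ℓ ∈ L, Monotone ℓ) (hℓ : ℓ ∈ L) :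
    ∃ L₂ : List (ℝ → ℝ), (∀ ℓ' ∈ L₂, Monotone ℓ') ∧
      ∀ t, range (shiftedComp L t) ⊆ (fun y => shiftedComp L₂ t (y + t)) '' range ℓ := by
  obtain ⟨L₁, L₂, rfl⟩ := List.append_of_mem hℓ
  refine ⟨L₂, fun ℓ' h => hL ℓ' (by simp [h]), fun t => ?_⟩
  rintro _ ⟨x, rfl⟩
  exact ⟨_, ⟨shiftedComp L₁ t x, rfl⟩, by simp [shiftedComp_append]⟩

theorem eventually_le_shiftedComp (hL : ∀ ℓ ∈ L, Monotone ℓ) (hℓ : ℓ ∈ L)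
    (hlo : BddBelow (range ℓ)) (b : ℝ) : ∀ᶠ t in atTop, ∀ x, b ≤ shiftedComp L t x := by
  obtain ⟨L₂, hL₂, hsub⟩ := exists_range_shiftedComp_subset hL hℓ
  obtain ⟨c, hc⟩ := hlo
  filter_upwards [eventually_ge_atTop 0, eventually_ge_atTop (b - shiftedComp L₂ 0 c)]
    with t ht hbt x
  obtain ⟨_, ⟨z, rfl⟩, hz⟩ := hsub t ⟨x, rfl⟩
  calc b ≤ shiftedComp L₂ 0 c + t := by linarith
    _ ≤ shiftedComp L₂ t (c + t) := add_le_shiftedComp hL₂ ht c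
    _ ≤ shiftedComp L t x := hz ▸ monotone_shiftedComp_add hL₂ t (hc ⟨z, rfl⟩)

theorem bddBelow_range_shiftedComp (hL : ∀ ℓ ∈ L, Monotone ℓ) (hℓ : ℓ ∈ L)
    (hlo : BddBelow (range ℓ)) (t : ℝ) : BddBelow (range (shiftedComp L t)) :=
  let ⟨_, hL₂, hsub⟩ := exists_range_shiftedComp_subset hL hℓ
  ((monotone_shiftedComp_add hL₂ t).map_bddBelow hlo).mono (hsub t)

theorem bddAbove_range_shiftedComp (hL : ∀ ℓ ∈ L, Monotone ℓ) (hℓ : ℓ ∈ L)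
    (hhi : BddAbove (range ℓ)) (t : ℝ) : BddAbove (range (shiftedComp L t)) :=
  let ⟨_, hL₂, hsub⟩ := exists_range_shiftedComp_subset hL hℓ
  ((monotone_shiftedComp_add hL₂ t).map_bddAbove hhi).mono (hsub t)

end ShiftedComp

section ShiftedCompFixedPoints

variable {L : List (ℝ → ℝ)}

theorem exists_volume_setOf_nontrivial_fixedPoints_shiftedComp_lt_top
    (hmono : ∀ ℓ ∈ L, Monotone ℓ) (hcont : ∀ ℓ ∈ L, Continuous ℓ)
    (hlo : ∃ ℓ ∈ L, BddBelow (range ℓ)) (hhi : ∃ ℓ ∈ L, BddAbove (range ℓ)) :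
    ∃ T, volume {t | T ≤ t ∧ (fixedPoints (shiftedComp L t)).Nontrivial} < ⊤ := by
  obtain ⟨ℓ, hℓ, B, hB⟩ := hhi
  obtain ⟨L₁, L₂, rfl⟩ := List.append_of_mem hℓ
  -- rotate the cycle so that the map bounded above comes last
  set M := L₂ ++ L₁
  have hmem : ∀ ℓ', ℓ' ∈ L₁ ++ ℓ :: L₂ ↔ ℓ' ∈ M ++ [ℓ] := fun ℓ' => by
    simp [M]; tauto
  have hMmono : ∀ ℓ' ∈ M ++ [ℓ], Monotone ℓ' := fun ℓ' h => hmono ℓ' ((hmem ℓ').2 h)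
  have hrot : ∀ t, (fun u => ℓ (shiftedComp M t u) + t) = shiftedComp (M ++ [ℓ]) t :=
    fun t => by funext u; simp [shiftedComp_append]
  obtain ⟨ℓ₀, hℓ₀, hℓ₀lo⟩ := hlo
  obtain ⟨T, hT⟩ := exists_volume_setOf_nontrivial_fixedPoints_lt_top (B := B)
    (φ := fun t u => ℓ (shiftedComp M t u))
    ((hMmono ℓ (by simp)).comp (monotone_shiftedComp fun ℓ' h => hMmono ℓ' (by simp [h])))
    ((hcont ℓ hℓ).comp (continuous_shiftedComp fun ℓ' h => hcont ℓ' ((hmem ℓ').2 (by simp [h]))))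
    (fun t u => hB ⟨_, rfl⟩)
    (fun b => (eventually_le_shiftedComp hMmono ((hmem ℓ₀).1 hℓ₀) hℓ₀lo b).mono fun t ht u => by
      simpa [shiftedComp_append] using ht u)
  refine ⟨T, (measure_mono ?_).trans_lt hT⟩
  rintro t ⟨hTt, h⟩
  refine ⟨hTt, ?_⟩
  rw [show L₁ ++ ℓ :: L₂ = (L₁ ++ [ℓ]) ++ L₂ by simp, shiftedComp_append] at h
  rw [hrot, show M ++ [ℓ] = L₂ ++ (L₁ ++ [ℓ]) by simp [M], shiftedComp_append]
  exact nontrivial_fixedPoints_comp_swap h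

theorem volume_setOf_nontrivial_fixedPoints_shiftedComp_lt_top
    (hmono : ∀ ℓ ∈ L, Monotone ℓ) (hcont : ∀ ℓ ∈ L, Continuous ℓ)
    (hlo : ∃ ℓ ∈ L, BddBelow (range ℓ)) (hhi : ∃ ℓ ∈ L, BddAbove (range ℓ)) :
    volume {t | (fixedPoints (shiftedComp L t)).Nontrivial} < ⊤ := by
  obtain ⟨T₁, h₁⟩ :=
    exists_volume_setOf_nontrivial_fixedPoints_shiftedComp_lt_top hmono hcont hlo hhi
  -- the case `t → -∞` is the case `t → +∞` for the conjugate maps `x ↦ -ℓ (-x)`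
  set L' := L.map fun ℓ x => -ℓ (-x)
  have hfix : ∀ t, fixedPoints (shiftedComp L' t) = -fixedPoints (shiftedComp L (-t)) := by
    intro t; ext x
    simp only [Set.mem_neg, mem_fixedPoints, IsFixedPt, L', shiftedComp_map_neg, neg_eq_iff_eq_neg]
  have hL'lo : ∃ ℓ ∈ L', BddBelow (range ℓ) := by
    obtain ⟨ℓ, hℓ, c, hc⟩ := hhi
    exact ⟨_, List.mem_map_of_mem hℓ, -c, by rintro _ ⟨x, rfl⟩; exact neg_le_neg (hc ⟨-x, rfl⟩)⟩
  have hL'hi : ∃ ℓ ∈ L', BddAbove (range ℓ) := by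
    obtain ⟨ℓ, hℓ, c, hc⟩ := hlo
    exact ⟨_, List.mem_map_of_mem hℓ, -c, by rintro _ ⟨x, rfl⟩; exact neg_le_neg (hc ⟨-x, rfl⟩)⟩
  obtain ⟨T₂, h₂⟩ := exists_volume_setOf_nontrivial_fixedPoints_shiftedComp_lt_top (L := L')
    (List.forall_mem_map.2 fun ℓ hℓ x y hxy => neg_le_neg (hmono ℓ hℓ (neg_le_neg hxy)))
    (List.forall_mem_map.2 fun ℓ hℓ => by have := hcont ℓ hℓ; fun_prop) hL'lo hL'hi
  have hsub : {t | (fixedPoints (shiftedComp L t)).Nontrivial} ⊆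
      {t | T₁ ≤ t ∧ (fixedPoints (shiftedComp L t)).Nontrivial} ∪
        -{t | T₂ ≤ t ∧ (fixedPoints (shiftedComp L' t)).Nontrivial} ∪ Icc (-T₂) T₁ := by
    intro t ht
    by_cases h₁ : T₁ ≤ t
    · exact Or.inl (Or.inl ⟨h₁, ht⟩)
    by_cases h₂ : t ≤ -T₂
    · refine Or.inl (Or.inr ⟨le_neg.1 h₂, ?_⟩)
      rw [hfix, neg_neg]
      simpa using ht.image neg_injective
    · exact Or.inr ⟨(not_le.1 h₂).le, (not_le.1 h₁).le⟩
  refine (measure_mono hsub).trans_lt ?_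
  refine (measure_union_le _ _).trans_lt (ENNReal.add_lt_top.2 ⟨?_, by simp⟩)
  refine (measure_union_le _ _).trans_lt (ENNReal.add_lt_top.2 ⟨h₁, ?_⟩)
  rwa [Measure.measure_neg]

theorem exists_isFixedPt_shiftedComp (hmono : ∀ ℓ ∈ L, Monotone ℓ)
    (hcont : ∀ ℓ ∈ L, Continuous ℓ) (hlo : ∃ ℓ ∈ L, BddBelow (range ℓ))
    (hhi : ∃ ℓ ∈ L, BddAbove (range ℓ)) (t : ℝ) :
    ∃ x, IsFixedPt (shiftedComp L t) x :=
  let ⟨_, hℓ, hℓlo⟩ := hlo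
  let ⟨_, hℓ', hℓhi⟩ := hhi
  exists_isFixedPt_of_bddBelow_of_bddAbove
    ((continuous_shiftedComp hcont).comp (continuous_const.prodMk continuous_id))
    (bddBelow_range_shiftedComp hmono hℓ hℓlo t) (bddAbove_range_shiftedComp hmono hℓ' hℓhi t)

end ShiftedCompFixedPoints

theorem EHN_unique_fixed_point_general (n : ℕ) (f : Fin n → ℝ → ℝ)
    (hmono : ∀ i, StrictMono (f i)) (hcont : ∀ i, Continuous (f i))
    (hlow : ∃ i, BddBelow (Set.range (f i)))
    (hhigh : ∃ j, BddAbove (Set.range (f j))) :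
    ∃ a b : ℕ → ℝ,
      MeasureTheory.volume (⋃ k, Set.Icc (a k) (b k)) < ⊤ ∧
      ∀ t : ℝ, t ∉ ⋃ k, Set.Icc (a k) (b k) →
        ∃! x : ℝ,
          (List.ofFn fun i : Fin n => fun z : ℝ => f i z + t).foldl
            (fun z g => g z) x = x := by
  have hfold : ∀ t x, (List.ofFn fun i : Fin n => fun z : ℝ => f i z + t).foldl (fun z g => g z) x
      = shiftedComp (List.ofFn f) t x := fun t x => by
    rw [shiftedComp_eq_foldl_map, List.map_ofFn]
    rfl
  have hLmono : ∀ ℓ ∈ List.ofFn f, Monotone ℓ := by simpa using fun i => (hmono i).monotone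
  have hLcont : ∀ ℓ ∈ List.ofFn f, Continuous ℓ := by simpa using hcont
  have hLlo : ∃ ℓ ∈ List.ofFn f, BddBelow (range ℓ) := by simpa using hlow
  have hLhi : ∃ ℓ ∈ List.ofFn f, BddAbove (range ℓ) := by simpa using hhigh
  obtain ⟨a, b, hab, hcover⟩ := exists_iUnion_Icc_superset_of_volume_lt_top
    (volume_setOf_nontrivial_fixedPoints_shiftedComp_lt_top hLmono hLcont hLlo hLhi)
  refine ⟨a, b, hab, fun t ht => ?_⟩
  simp only [hfold]
  obtain ⟨x, hx⟩ := exists_isFixedPt_shiftedComp hLmono hLcont hLlo hLhi t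
  exact ⟨x, hx, fun y hy => by_contra fun hyx => ht (hcover ⟨y, hy, x, hx, hyx⟩)⟩

/-- Lemma 4.8, EHN-type lemma. For increasing homeomorphisms
`f_i : ℝ → (a_i, b_i)` with some `a_i > -∞` and some `b_j < +∞`, outside a countable
union of closed intervals of finite total Lebesgue measure, the composition
`F_t = τ_t ∘ f_n ∘ ⋯ ∘ τ_t ∘ f_1` has a unique fixed point. -/
theorem EHN_unique_fixed_point (n : ℕ) (hn : 1 ≤ n) (f : Fin n → ℝ → ℝ)
    (hmono : ∀ i, StrictMono (f i)) (hcont : ∀ i, Continuous (f i))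
    (hlow : ∃ i, BddBelow (Set.range (f i)))
    (hhigh : ∃ j, BddAbove (Set.range (f j))) :
    ∃ a b : ℕ → ℝ,
      MeasureTheory.volume (⋃ k, Set.Icc (a k) (b k)) < ⊤ ∧
      ∀ t : ℝ, t ∉ ⋃ k, Set.Icc (a k) (b k) →
        ∃! x : ℝ,
          (List.ofFn fun i : Fin n => fun z : ℝ => f i z + t).foldl
            (fun z g => g z) x = x :=
  EHN_unique_fixed_point_general n f hmono hcont hlow hhigh
end

section
/- With the setup of the finite-fixed-point lemma (f_i increasing homeomorphisms onto intervals, with f_n having bounded-above image b_n < ∞, and some a_j > −∞), define G(t,x) = F_t(x) − t where F_t = τ_t∘f_n∘⋯∘τ_t∘f_1. Then the range of G on ℝ_{≥0} × ℝ is a bounded interval, and for every x ≥ b_0 := sup range(G) there is a unique t = T(x) > 0 with F_{T(x)}(x) = x. Moreover the function T satisfies: (T1) for every x ≥ b_0, a_0 < x − T(x) < b_0 where (a_0,b_0) is the range of G; and (T2) for all b_0 ≤ x_1 < x_2, f_1(x_1) − f_1(x_2) < T(x_2) − T(x_1) < x_2 − x_1. -/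
open Set Function Filter MeasureTheory

/-!
Write `G(t, x) = F_t(x) - t`. As `F_t` ends with `τ_t ∘ f_n`, `G` takes values in the range of
`f_n`; past a map `f_j` bounded below the orbit stays bounded below, and
`F_t(y + t) - t ≥ F_0(y)` for `t ≥ 0` keeps `G` bounded below. The range of `G` is connected and,
`G` being strictly increasing in `x`, has no maximum or minimum, so it is an open interval
`(a₀, b₀)`. Since `G` is increasing in `t`, `t ↦ F_t(x)` is continuous, strictly increasing and
at least `F_0(x) + t`, while `F_0(x) < b₀ ≤ x`: the intermediate value theorem gives a unique
`T(x) > 0`. Then `x - T(x) = G(T(x), x)` gives (T1), and (T2) comes from comparing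
`F_{T(x₁)}(x₁) = x₁ < x₂ = F_{T(x₂)}(x₂)` through the monotonicity of `F` in `t` and `x`,
peeling off `f_1` for the lower bound.
-/

theorem IsConnected.eq_Ioo_csInf_csSup {α : Type*} [TopologicalSpace α]
    [ConditionallyCompleteLinearOrder α] [OrderTopology α] {s : Set α} (hs : IsConnected s)
    (hb : BddBelow s) (ha : BddAbove s) (hmin : ∀ y ∈ s, ∃ z ∈ s, z < y)
    (hmax : ∀ y ∈ s, ∃ z ∈ s, y < z) : s = Ioo (sInf s) (sSup s) := by
  refine Subset.antisymm (fun y hy => ⟨?_, ?_⟩) (hs.Ioo_csInf_csSup_subset hb ha)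
  · obtain ⟨z, hz, hzy⟩ := hmin y hy
    exact (csInf_le hb hz).trans_lt hzy
  · obtain ⟨z, hz, hyz⟩ := hmax y hy
    exact hyz.trans_le (le_csSup ha hz)

/-- `shiftComp [f₁, …, fₙ] t` is the paper's `F_t = τ_t ∘ fₙ ∘ ⋯ ∘ τ_t ∘ f₁`. -/
def shiftComp (L : List (ℝ → ℝ)) (t x : ℝ) : ℝ :=
  (L.map fun g z => g z + t).foldl (fun z g => g z) x

/-- The range of `G(t, x) = F_t(x) - t` on `ℝ≥0 × ℝ`. -/
def shiftCompRange (L : List (ℝ → ℝ)) : Set ℝ :=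
  {y | ∃ t x, 0 ≤ t ∧ shiftComp L t x - t = y}

section shiftComp

variable {L : List (ℝ → ℝ)} {g : ℝ → ℝ} {t t' x x' : ℝ}

theorem shiftComp_cons : shiftComp (g :: L) t x = shiftComp L t (g x + t) := rfl

theorem shiftComp_concat : shiftComp (L ++ [g]) t x = g (shiftComp L t x) + t := by
  simp [shiftComp]

theorem strictMono_shiftComp (hL : ∀ g ∈ L, StrictMono g) (t : ℝ) :
    StrictMono (shiftComp L t) := by
  induction L with
  | nil => exact strictMono_id
  | cons g L ih =>
    rw [List.forall_mem_cons] at hL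
    exact fun x y hxy => ih hL.2 (add_lt_add_left (hL.1 hxy) t)

theorem shiftComp_le_shiftComp (hL : ∀ g ∈ L, Monotone g) (ht : t ≤ t') (hx : x ≤ x') :
    shiftComp L t x ≤ shiftComp L t' x' := by
  induction L generalizing x x' with
  | nil => exact hx
  | cons g L ih =>
    rw [List.forall_mem_cons] at hL
    exact ih hL.2 (add_le_add (hL.1 hx) ht)

theorem continuous_shiftComp (hL : ∀ g ∈ L, Continuous g) :
    Continuous fun p : ℝ × ℝ => shiftComp L p.1 p.2 := by
  induction L with
  | nil => exact continuous_snd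
  | cons g L ih =>
    rw [List.forall_mem_cons] at hL
    exact (ih hL.2).comp (continuous_fst.prodMk ((hL.1.comp continuous_snd).add continuous_fst))

theorem shiftComp_zero_le (hL : ∀ g ∈ L, Monotone g) (ht : 0 ≤ t) (x : ℝ) :
    shiftComp L 0 x ≤ shiftComp L t (x + t) - t := by
  induction L generalizing x with
  | nil => simp [shiftComp]
  | cons g L ih =>
    rw [List.forall_mem_cons] at hL
    calc shiftComp (g :: L) 0 x ≤ shiftComp L 0 (g (x + t)) :=
          shiftComp_le_shiftComp hL.2 le_rfl (by simpa using hL.1 (le_add_of_nonneg_right ht))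
      _ ≤ shiftComp (g :: L) t (x + t) - t := ih hL.2 _

theorem monotone_shiftComp_concat_sub (hL : ∀ h ∈ L, Monotone h) (hg : Monotone g) (x : ℝ) :
    Monotone fun t => shiftComp (L ++ [g]) t x - t := fun t t' htt' => by
  simpa only [shiftComp_concat, add_sub_cancel_right] using
    hg (shiftComp_le_shiftComp hL htt' le_rfl)

theorem strictMono_shiftComp_concat (hL : ∀ h ∈ L, Monotone h) (hg : Monotone g) (x : ℝ) :
    StrictMono fun t => shiftComp (L ++ [g]) t x := by
  simpa using (monotone_shiftComp_concat_sub hL hg x).add_strictMono strictMono_id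

theorem continuous_shiftComp_apply (hL : ∀ g ∈ L, Continuous g) (x : ℝ) :
    Continuous fun t => shiftComp L t x :=
  (continuous_shiftComp hL).comp (continuous_id.prodMk continuous_const)

theorem exists_pos_isFixedPt_shiftComp_concat (hL : ∀ h ∈ L, Monotone h) (hg : Monotone g)
    (hc : ∀ h ∈ L ++ [g], Continuous h) (hx : shiftComp (L ++ [g]) 0 x < x) :
    ∃ t, 0 < t ∧ IsFixedPt (shiftComp (L ++ [g]) t) x := by
  set φ := fun t => shiftComp (L ++ [g]) t x
  have hφ : x ≤ φ (x - φ 0) := by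
    have := monotone_shiftComp_concat_sub hL hg x (sub_nonneg.2 hx.le)
    simp only [sub_zero] at this
    linarith
  obtain ⟨t, ht, hφt⟩ := intermediate_value_Icc (sub_nonneg.2 hx.le)
    (continuous_shiftComp_apply hc x).continuousOn ⟨hx.le, hφ⟩
  refine ⟨t, ht.1.lt_of_ne ?_, hφt⟩
  rintro rfl
  exact hx.ne hφt

theorem bddAbove_shiftCompRange_concat (hg : BddAbove (range g)) :
    BddAbove (shiftCompRange (L ++ [g])) :=
  hg.mono <| by
    rintro _ ⟨t, x, -, rfl⟩
    exact ⟨shiftComp L t x, by rw [shiftComp_concat, add_sub_cancel_right]⟩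

theorem bddBelow_shiftCompRange (hL : ∀ h ∈ L, Monotone h) (hg : g ∈ L)
    (hb : BddBelow (range g)) : BddBelow (shiftCompRange L) := by
  obtain ⟨a, ha⟩ := hb
  obtain ⟨L₁, L₂, rfl⟩ := List.append_of_mem hg
  have hL₂ : ∀ h ∈ L₂, Monotone h := fun h hh => hL h (by simp [hh])
  refine ⟨shiftComp L₂ 0 a, ?_⟩
  rintro _ ⟨t, x, ht, rfl⟩
  have hga : a ≤ g (shiftComp L₁ t x) := ha ⟨_, rfl⟩
  calc shiftComp L₂ 0 a ≤ shiftComp L₂ 0 (g (shiftComp L₁ t x)) :=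
        shiftComp_le_shiftComp hL₂ le_rfl hga
    _ ≤ shiftComp (L₁ ++ g :: L₂) t x - t := by
        simpa [shiftComp, List.foldl_append] using shiftComp_zero_le hL₂ ht _

theorem isConnected_shiftCompRange (hL : ∀ h ∈ L, Continuous h) :
    IsConnected (shiftCompRange L) := by
  have : shiftCompRange L =
      (fun p : ℝ × ℝ => shiftComp L p.1 p.2 - p.1) '' (Ici 0 ×ˢ univ) := by
    ext y
    simp [shiftCompRange, and_comm]
  rw [this]
  exact (isConnected_Ici.prod isConnected_univ).image _
    ((continuous_shiftComp hL).sub continuous_fst).continuousOn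

theorem shiftCompRange_eq_Ioo (hL : ∀ h ∈ L, StrictMono h) (hc : ∀ h ∈ L, Continuous h)
    (hlow : ∃ h ∈ L, BddBelow (range h)) (hup : BddAbove (shiftCompRange L)) :
    shiftCompRange L = Ioo (sInf (shiftCompRange L)) (sSup (shiftCompRange L)) := by
  obtain ⟨h, hh, hb⟩ := hlow
  refine (isConnected_shiftCompRange hc).eq_Ioo_csInf_csSup
    (bddBelow_shiftCompRange (fun h hh => (hL h hh).monotone) hh hb) hup ?_ ?_
  all_goals rintro _ ⟨t, x, ht, rfl⟩
  · exact ⟨_, ⟨t, x - 1, ht, rfl⟩, by gcongr; exact strictMono_shiftComp hL t (by linarith)⟩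
  · exact ⟨_, ⟨t, x + 1, ht, rfl⟩, by gcongr; exact strictMono_shiftComp hL t (by linarith)⟩

theorem sub_lt_sub_of_isFixedPt_shiftComp_cons (hL : ∀ h ∈ L, Monotone h) (hg : Monotone g)
    {t₁ t₂ x₁ x₂ : ℝ} (h₁ : IsFixedPt (shiftComp (g :: L) t₁) x₁)
    (h₂ : IsFixedPt (shiftComp (g :: L) t₂) x₂) (hx : x₁ < x₂) :
    g x₁ - g x₂ < t₂ - t₁ := by
  by_contra! hle
  have : shiftComp L t₂ (g x₂ + t₂) ≤ shiftComp L t₁ (g x₁ + t₁) :=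
    shiftComp_le_shiftComp hL (by linarith [hg hx.le]) (by linarith)
  rw [← shiftComp_cons, ← shiftComp_cons, h₁.eq, h₂.eq] at this
  exact hx.not_ge this

theorem sub_lt_sub_of_isFixedPt_shiftComp_concat (hL : ∀ h ∈ L ++ [g], StrictMono h)
    {t₁ t₂ x₁ x₂ : ℝ} (h₁ : IsFixedPt (shiftComp (L ++ [g]) t₁) x₁)
    (h₂ : IsFixedPt (shiftComp (L ++ [g]) t₂) x₂) (hx : x₁ < x₂) :
    t₂ - t₁ < x₂ - x₁ := by
  rcases lt_or_ge t₂ t₁ with ht | ht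
  · linarith
  -- `G(t₁, x₁) < G(t₁, x₂) ≤ G(t₂, x₂)`, that is `x₁ - t₁ < x₂ - t₂`
  have hG : shiftComp (L ++ [g]) t₁ x₂ - t₁ ≤ shiftComp (L ++ [g]) t₂ x₂ - t₂ :=
    monotone_shiftComp_concat_sub (fun h hh => (hL h (List.mem_append_left _ hh)).monotone)
      (hL g (by simp)).monotone x₂ ht
  have hF : shiftComp (L ++ [g]) t₁ x₁ < shiftComp (L ++ [g]) t₁ x₂ :=
    strictMono_shiftComp hL t₁ hx
  linarith [h₁.eq, h₂.eq]

end shiftComp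

theorem foldl_ofFn_eq_shiftComp {n : ℕ} (f : Fin n → ℝ → ℝ) (t x : ℝ) :
    (List.ofFn fun i => fun z => f i z + t).foldl (fun z g => g z) x =
      shiftComp (List.ofFn f) t x := by
  simp [shiftComp, List.map_ofFn, Function.comp_def]

/-- Sublemma on `T`, within the EHN lemma. `G(t,x) = F_t(x) − t` has
bounded-interval range `(a₀,b₀)` on `ℝ≥0 × ℝ`; for every `x ≥ b₀` there is a unique
`t = T(x) > 0` with `F_{T(x)}(x) = x`; and `T` satisfies (T1) and (T2). -/
theorem EHN_T_function (n : ℕ) (hn : 0 < n) (f : Fin n → ℝ → ℝ)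
    (hmono : ∀ i, StrictMono (f i)) (hcont : ∀ i, Continuous (f i))
    (hlow : ∃ i, BddBelow (Set.range (f i)))
    (hlast : BddAbove (Set.range (f ⟨n - 1, by omega⟩))) :
    ∃ a0 b0 : ℝ, a0 < b0 ∧
      {y : ℝ | ∃ t x : ℝ, 0 ≤ t ∧
          (List.ofFn fun i : Fin n => fun z : ℝ => f i z + t).foldl
            (fun z g => g z) x - t = y}
        = Set.Ioo a0 b0 ∧
      ∃ T : ℝ → ℝ,
        (∀ x : ℝ, b0 ≤ x →
          0 < T x ∧
          (List.ofFn fun i : Fin n => fun z : ℝ => f i z + T x).foldl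
            (fun z g => g z) x = x ∧
          ∀ t : ℝ, 0 < t →
            (List.ofFn fun i : Fin n => fun z : ℝ => f i z + t).foldl
              (fun z g => g z) x = x → t = T x) ∧
        (∀ x : ℝ, b0 ≤ x → a0 < x - T x ∧ x - T x < b0) ∧
        (∀ x1 x2 : ℝ, b0 ≤ x1 → x1 < x2 →
          f ⟨0, hn⟩ x1 - f ⟨0, hn⟩ x2 < T x2 - T x1 ∧ T x2 - T x1 < x2 - x1) := by
  obtain ⟨m, rfl⟩ : ∃ m, n = m + 1 := ⟨n - 1, by omega⟩
  simp only [foldl_ofFn_eq_shiftComp]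
  set S := shiftCompRange (List.ofFn f) with hSdef
  have hsplit : List.ofFn f = (List.ofFn fun i : Fin m => f i.castSucc) ++ [f (Fin.last m)] :=
    (List.ofFn_succ' f).trans List.concat_eq_append
  have hinit : ∀ g ∈ List.ofFn fun i : Fin m => f i.castSucc, Monotone g :=
    List.forall_mem_ofFn_iff.2 fun i => (hmono _).monotone
  have hmono' : ∀ g ∈ List.ofFn f, StrictMono g := List.forall_mem_ofFn_iff.2 hmono
  have hcont' : ∀ g ∈ List.ofFn f, Continuous g := List.forall_mem_ofFn_iff.2 hcont
  have hup : BddAbove S := by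
    rw [hSdef, hsplit]
    exact bddAbove_shiftCompRange_concat hlast
  obtain ⟨i, hi⟩ := hlow
  have hS := shiftCompRange_eq_Ioo hmono' hcont' ⟨f i, List.mem_ofFn.2 ⟨i, rfl⟩, hi⟩ hup
  have hG (t x : ℝ) (ht : 0 ≤ t) : shiftComp (List.ofFn f) t x - t ∈ Ioo (sInf S) (sSup S) :=
    hS ▸ ⟨t, x, ht, rfl⟩
  have hex (x : ℝ) (hx : sSup S ≤ x) : ∃ t, 0 < t ∧ IsFixedPt (shiftComp (List.ofFn f) t) x := by
    have h0 : shiftComp (List.ofFn f) 0 x < x := by linarith [(hG 0 x le_rfl).2]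
    rw [hsplit] at h0 hcont' ⊢
    exact exists_pos_isFixedPt_shiftComp_concat hinit (hmono _).monotone hcont' h0
  choose! T hT using hex
  have hinj (x : ℝ) : Injective fun t => shiftComp (List.ofFn f) t x :=
    (hsplit ▸ strictMono_shiftComp_concat hinit (hmono _).monotone x).injective
  refine ⟨sInf S, sSup S, (hG 0 0 le_rfl).1.trans (hG 0 0 le_rfl).2, hS, T,
    fun x hx => ⟨(hT x hx).1, (hT x hx).2, fun t _ ht => hinj x (ht.trans (hT x hx).2.symm)⟩,
    fun x hx => ?_, fun x₁ x₂ hx₁ hx => ⟨?_, ?_⟩⟩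
  · have := hG (T x) x (hT x hx).1.le
    rwa [(hT x hx).2.eq] at this
  · rw [List.ofFn_succ] at hT
    exact sub_lt_sub_of_isFixedPt_shiftComp_cons
      (List.forall_mem_ofFn_iff.2 fun i => (hmono _).monotone) (hmono 0).monotone
      (hT x₁ hx₁).2 (hT x₂ (hx₁.trans hx.le)).2 hx
  · rw [hsplit] at hT hmono'
    exact sub_lt_sub_of_isFixedPt_shiftComp_concat hmono' (hT x₁ hx₁).2
      (hT x₂ (hx₁.trans hx.le)).2 hx
end

section
/- Let f, g ∈ Homeo⁺(S¹) have rational rotation numbers, let f_t be a positive one-parameter family commuting with f, and set g_t = f_t∘g. Suppose the rotation number of g_t is constant in t. Then the set P(f,g) of persistent periodic points satisfies P(f,g) = Per(g) ∩ ⋂_{k=0}^{q(g)−1} g^k(∂Per(f)). In particular, if rot(f) = 0, then every element of P(f,g) has a finite orbit under the group generated by f and g. -/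
open Set Function Filter MeasureTheory

/-! Let `φ` and `ψ_t` be the canonical lifts of `g` and `f_t`. Since `ψ_0 = id`, `δ(x,0) = 0` says
exactly that `x` is `g`-periodic, with `φ^{q(g)} x = x + p(g)`. For `t > 0` we have `ψ_t ≥ id`
with equality exactly on `∂Per(f)`, so `δ(x,t) = δ(x,0)` forces the points `φ^k x`,
`1 ≤ k ≤ q(g)`, onto `∂Per(f)`; conversely every `ψ_t` fixes them, so `δ(x,t)` does not depend
on `t`. Along a periodic orbit, `g^{k+1} x ∈ ∂Per(f)` for all `k < q(g)` is the same as
`x ∈ g^k(∂Per(f))`. If `rot(f) = 0`, then `f` acts as the identity on the closure of `Per(f)`,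
hence on this finite orbit. -/

namespace Function

variable {α : Type*}

theorem iterate_comp_eq_of_isFixedPt {φ ψ : α → α} {x : α} {n : ℕ}
    (h : ∀ k < n, IsFixedPt ψ (φ^[k + 1] x)) : (ψ ∘ φ)^[n] x = φ^[n] x := by
  induction n with
  | zero => rfl
  | succ n ih =>
    rw [iterate_succ_apply', iterate_succ_apply', comp_apply, ih fun k hk => h k (by omega),
      ← iterate_succ_apply' φ]
    exact h n n.lt_succ_self

/-- If `ψ` only pushes points up, an orbit of `ψ ∘ φ` that catches up with the orbit of `φ`
after `n` steps must have coincided with it all along, so `ψ` fixed every point visited. -/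
theorem isFixedPt_of_iterate_comp_eq [LinearOrder α] {φ ψ : α → α} (hφ : StrictMono φ)
    (hψ : ∀ y, y ≤ ψ y) {x : α} {n : ℕ} (h : (ψ ∘ φ)^[n] x = φ^[n] x) :
    ∀ k < n, IsFixedPt ψ (φ^[k + 1] x) := by
  have hle : ∀ k, φ^[k] x ≤ (ψ ∘ φ)^[k] x := fun k =>
    hφ.monotone.iterate_le_of_le (fun y => hψ (φ y)) k x
  have hlt : ∀ k, φ^[k] x < (ψ ∘ φ)^[k] x → ∀ j ≥ k, φ^[j] x < (ψ ∘ φ)^[j] x := by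
    intro k hk j hj
    induction j, hj using Nat.le_induction with
    | base => exact hk
    | succ j _ ih =>
      rw [iterate_succ_apply', iterate_succ_apply']
      exact (hφ ih).trans_le (hψ _)
  have heq : ∀ k ≤ n, (ψ ∘ φ)^[k] x = φ^[k] x := fun k hk =>
    by_contra fun hne => (hlt k ((hle k).lt_of_ne (Ne.symm hne)) n hk).ne' h
  intro k hk
  have h1 := heq (k + 1) hk
  rw [iterate_succ_apply', heq k hk.le, comp_apply, ← iterate_succ_apply' φ] at h1
  exact h1

end Function

namespace CircleDeg1Lift

theorem pow_apply_eq_add_of_mul_translationNumber (f : CircleDeg1Lift) {x : ℝ} {n q : ℕ}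
    {m m' : ℤ} (hn : 0 < n) (hx : (f ^ n) x = x + m) (hq : (q : ℝ) * f.translationNumber = m') :
    (f ^ q) x = x + m' := by
  have hmm : (q : ℝ) * m = n * m' := by
    rw [← hq, f.translationNumber_of_map_pow_eq_add_int hx hn]
    field_simp
  rw [← (f ^ q).iterate_pos_eq_iff hn, ← coe_pow, ← pow_mul, mul_comm, pow_mul, coe_pow,
    (f ^ n).iterate_eq_of_map_eq_add_int hx, hmm]

end CircleDeg1Lift

theorem sInf_residue_add_mul_floor_eq {q : ℕ} (hq : 0 < q) {τ : ℝ} {m : ℤ}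
    (h : (q : ℝ) * τ = m) :
    ((sInf {p : ℕ | ∃ k : ℤ, τ = p / q + k} : ℕ) : ℤ) + q * ⌊τ⌋ = m := by
  have hqR : (0 : ℝ) < q := by exact_mod_cast hq
  set P := {p : ℕ | ∃ k : ℤ, τ = p / q + k}
  have hmod_nonneg : 0 ≤ m % q := Int.emod_nonneg _ (by omega)
  have hmod_lt : m % q < q := Int.emod_lt_of_pos _ (by omega)
  have hr : (m % q).toNat ∈ P := by
    refine ⟨m / q, ?_⟩
    have hdecomp : ((m % q : ℤ) : ℝ) + q * ((m / q : ℤ) : ℝ) = m := by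
      exact_mod_cast Int.emod_add_mul_ediv m q
    have hcast : ((m % q).toNat : ℝ) = ((m % q : ℤ) : ℝ) := by
      exact_mod_cast Int.toNat_of_nonneg hmod_nonneg
    rw [hcast]
    field_simp
    linarith
  obtain ⟨k, hk⟩ : sInf P ∈ P := Nat.sInf_mem ⟨_, hr⟩
  have hlt : sInf P < q := by
    have := Nat.sInf_le hr
    omega
  have hfrac : ((sInf P : ℕ) : ℝ) / q < 1 := (div_lt_one hqR).mpr (by exact_mod_cast hlt)
  have hfloor : ⌊τ⌋ = k := by
    rw [Int.floor_eq_iff, hk]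
    constructor
    · linarith [div_nonneg (Nat.cast_nonneg (sInf P)) hqR.le]
    · linarith
  have : (m : ℝ) = sInf P + q * k := by
    rw [← h, hk]
    field_simp
  rw [hfloor]
  exact_mod_cast this.symm

theorem forall_iterate_succ_mem_iff {φ : ℝ → ℝ} {S : Set ℝ}
    (hS : ∀ (y : ℝ) (m : ℤ), y + m ∈ S ↔ y ∈ S) {q : ℕ} {x : ℝ} {M : ℤ}
    (hx : φ^[q] x = x + M) : (∀ k < q, φ^[k + 1] x ∈ S) ↔ ∀ k < q, φ^[k] x ∈ S := by
  constructor
  · rintro h (_ | k) hk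
    · have := h (q - 1) (by omega)
      rwa [Nat.sub_add_cancel (by omega), hx, hS] at this
    · exact h k (by omega)
  · intro h k hk
    rcases (Nat.succ_le_of_lt hk).lt_or_eq with hlt | heq
    · exact h (k + 1) hlt
    · rw [show k + 1 = q from heq, hx, hS]
      exact h 0 (by omega)

namespace HomeoZR

theorem continuous_toFun (f : HomeoZR) : Continuous f.toFun :=
  (f.strictMono.orderIsoOfSurjective _ fun y => ⟨f.invFun y, f.right_inv y⟩).continuous

theorem toLift_pow (f : HomeoZR) (n : ℕ) : ⇑(f.toLift ^ n) = f.toFun^[n] := by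
  rw [CircleDeg1Lift.coe_pow]
  rfl

theorem iterate_add_int (f : HomeoZR) (n : ℕ) (x : ℝ) (m : ℤ) :
    f.toFun^[n] (x + m) = f.toFun^[n] x + m := by
  simpa only [toLift_pow] using (f.toLift ^ n).map_add_int x m

theorem canon_strictMono (f : HomeoZR) : StrictMono f.canon := fun _ _ h =>
  sub_lt_sub_right (f.strictMono h) _

theorem canon_iterate (f : HomeoZR) (n : ℕ) (x : ℝ) :
    f.canon^[n] x = f.toFun^[n] x - (n * ⌊f.transNum⌋ : ℤ) := by
  induction n with
  | zero => simp
  | succ n ih =>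
    rw [iterate_succ_apply', ih, iterate_succ_apply', canon,
      show f.toFun (f.toFun^[n] x - (n * ⌊f.transNum⌋ : ℤ)) =
        f.toFun (f.toFun^[n] x) - (n * ⌊f.transNum⌋ : ℤ) from f.toLift.map_sub_int _ _]
    push_cast
    ring

theorem canon_iterate_mem_iff (f : HomeoZR) {S : Set ℝ}
    (hS : ∀ (y : ℝ) (m : ℤ), y + m ∈ S ↔ y ∈ S) (n : ℕ) (x : ℝ) :
    f.canon^[n] x ∈ S ↔ f.toFun^[n] x ∈ S := by
  rw [canon_iterate, sub_eq_add_neg, ← Int.cast_neg, hS]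

theorem canon_eq_of_mem_FixS (f : HomeoZR) {y : ℝ} (hy : y ∈ f.FixS) : f.canon y = y := by
  obtain ⟨m, hm⟩ := hy
  have hτ : f.transNum = m := f.toLift.translationNumber_of_eq_add_int hm
  simp [canon, hm, hτ]

theorem add_int_mem_Per_iff (f : HomeoZR) (x : ℝ) (m : ℤ) : x + m ∈ f.Per ↔ x ∈ f.Per := by
  have hadd : ∀ (x : ℝ) (m : ℤ), x ∈ f.Per → x + m ∈ f.Per := by
    rintro x m ⟨n, hn, k, hk⟩
    exact ⟨n, hn, k, by rw [f.iterate_add_int, hk]; ring⟩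
  refine ⟨fun h => ?_, hadd x m⟩
  simpa using hadd _ (-m) h

theorem add_int_mem_frontier_Per_iff (f : HomeoZR) (x : ℝ) (m : ℤ) :
    x + m ∈ frontier f.Per ↔ x ∈ frontier f.Per := by
  have hPer : (Homeomorph.addRight (m : ℝ)) ⁻¹' f.Per = f.Per :=
    Set.ext fun y => f.add_int_mem_Per_iff y m
  have h := (Homeomorph.addRight (m : ℝ)).preimage_frontier f.Per
  rw [hPer] at h
  exact Set.ext_iff.1 h x

theorem frontier_Per_subset_FixS {f : HomeoZR} {m : ℤ} (hm : f.transNum = m) :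
    frontier f.Per ⊆ f.FixS := by
  have hPer : f.Per ⊆ {z | f.toFun z = z + m} := by
    rintro z ⟨n, hn, k, hk⟩
    have := f.toLift.pow_apply_eq_add_of_mul_translationNumber (q := 1) hn
      (by rwa [toLift_pow]) (by rw [Nat.cast_one, one_mul]; exact hm)
    rwa [pow_one] at this
  have hclosed : IsClosed {z | f.toFun z = z + m} :=
    isClosed_eq f.continuous_toFun (continuous_id.add continuous_const)
  exact fun y hy => ⟨m, closure_minimal hPer hclosed (frontier_subset_closure hy)⟩

theorem q_spec (g : HomeoZR) (hg : RatRot g) :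
    0 < g.q ∧ ∃ x : ℝ, ∃ m : ℤ, g.toFun^[g.q] x = x + m := by
  obtain ⟨r, hr⟩ := hg
  obtain ⟨x, hx⟩ := (g.toLift.translationNumber_eq_rat_iff g.continuous_toFun r.pos).1
    (by rw [← Rat.cast_def]; exact hr)
  exact Nat.sInf_mem (s := {n : ℕ | 0 < n ∧ ∃ x : ℝ, ∃ m : ℤ, g.toFun^[n] x = x + m})
    ⟨r.den, r.pos, x, r.num, by rwa [← toLift_pow]⟩

theorem iterate_q_of_mem_Per {g : HomeoZR} (hg : RatRot g) {x : ℝ} (hx : x ∈ g.Per) :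
    g.toFun^[g.q] x = x + (g.p + g.q * ⌊g.transNum⌋ : ℤ) := by
  obtain ⟨hq, y, m, hy⟩ := g.q_spec hg
  obtain ⟨n, hn, k, hk⟩ := hx
  have hτ : (g.q : ℝ) * g.transNum = m := by
    rw [transNum, ← CircleDeg1Lift.translationNumber_pow]
    exact (g.toLift ^ g.q).translationNumber_of_eq_add_int (by rwa [toLift_pow])
  have hM : (g.p : ℤ) + g.q * ⌊g.transNum⌋ = m := sInf_residue_add_mul_floor_eq hq hτ
  rw [hM, ← toLift_pow]
  exact g.toLift.pow_apply_eq_add_of_mul_translationNumber hn (by rwa [toLift_pow]) hτ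

theorem mem_Per_iff_canon {g : HomeoZR} (hg : RatRot g) {x : ℝ} :
    x ∈ g.Per ↔ g.canon^[g.q] x = x + g.p := by
  rw [canon_iterate]
  constructor
  · intro hx
    rw [iterate_q_of_mem_Per hg hx]
    push_cast
    ring
  · intro h
    refine ⟨g.q, (g.q_spec hg).1, g.p + g.q * ⌊g.transNum⌋, ?_⟩
    push_cast at h ⊢
    linarith

theorem forall_iterate_succ_mem_iff_forall_mem_image (g : HomeoZR) {S : Set ℝ}
    (hS : ∀ (y : ℝ) (m : ℤ), y + m ∈ S ↔ y ∈ S) {q : ℕ} {x : ℝ} {M : ℤ}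
    (hx : g.toFun^[q] x = x + M) :
    (∀ k < q, g.toFun^[k + 1] x ∈ S) ↔ ∀ k < q, x ∈ g.toFun^[k] '' S := by
  constructor
  · intro h k hk
    refine ⟨g.toFun^[q - k] x + (-M : ℤ), ?_, ?_⟩
    · rw [hS, show q - k = q - k - 1 + 1 by omega]
      exact h _ (by omega)
    · rw [iterate_add_int, ← iterate_add_apply, Nat.add_sub_cancel' hk.le, hx]
      push_cast
      ring
  · intro h k hk
    obtain ⟨y, hy, rfl⟩ := h (q - 1 - k) (by omega)
    have hy_per : g.toFun^[q] y = y + M := by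
      apply (g.strictMono.iterate (q - 1 - k)).injective
      rw [← iterate_add_apply, add_comm, iterate_add_apply, hx, iterate_add_int]
    rw [← iterate_add_apply, show k + 1 + (q - 1 - k) = q by omega, hy_per, hS]
    exact hy

theorem finiteOrbit_of_iterate_eq_add (f g : HomeoZR) {q : ℕ} (hq : 0 < q) {x : ℝ} {M : ℤ}
    (hx : g.toFun^[q] x = x + M) (hfix : ∀ k < q, g.toFun^[k] x ∈ f.FixS) :
    FiniteOrbit f g x := by
  refine ⟨(g.toFun^[·] x) '' Iio q, (finite_Iio q).image _, ⟨0, hq, rfl⟩, ?_, ?_⟩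
  · rintro _ ⟨k, hk, rfl⟩
    exact ⟨_, ⟨k, hk, rfl⟩, hfix k hk⟩
  · rintro _ ⟨k, hk, rfl⟩
    rw [← iterate_succ_apply' g.toFun k]
    rcases (Nat.succ_le_of_lt hk).lt_or_eq with hlt | heq
    · exact ⟨_, ⟨k + 1, hlt, rfl⟩, 0, by simp⟩
    · exact ⟨x, ⟨0, hq, rfl⟩, M, by rw [heq, hx]⟩

end HomeoZR

namespace PosFamily

variable {f : HomeoZR} {F : ℝ → HomeoZR}

theorem toFun_zero (hF : PosFamily f F) : (F 0).toFun = id :=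
  funext fun z => (F 0).strictMono.injective (congrFun (by simpa using hF.1 0 0) z).symm

theorem canon_zero (hF : PosFamily f F) : (F 0).canon = id :=
  funext fun _ => (F 0).canon_eq_of_mem_FixS ⟨0, by simp [hF.toFun_zero]⟩

theorem isFixedPt_canon (hF : PosFamily f F) (t : ℝ) {y : ℝ} (hy : y ∈ frontier f.Per) :
    IsFixedPt (F t).canon y := by
  rcases eq_or_ne t 0 with rfl | ht
  · rw [hF.canon_zero]
    rfl
  · exact (F t).canon_eq_of_mem_FixS (by rwa [hF.2.2.1 t ht])

theorem le_canon (hF : PosFamily f F) {t : ℝ} (ht : 0 < t) (y : ℝ) : y ≤ (F t).canon y := by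
  by_cases hy : y ∈ frontier f.Per
  · exact (hF.isFixedPt_canon t hy).ge
  · exact (hF.2.2.2 t ht y hy).le

theorem mem_frontier_of_isFixedPt (hF : PosFamily f F) {t : ℝ} (ht : 0 < t) {y : ℝ}
    (hy : IsFixedPt (F t).canon y) : y ∈ frontier f.Per :=
  by_contra fun h => (hF.2.2.2 t ht y h).ne' hy

theorem mem_Pset_iff (hF : PosFamily f F) {g : HomeoZR} (hg : RatRot g) {x : ℝ} :
    x ∈ Pset F g ↔ x ∈ g.Per ∧ ∀ k < g.q, g.toFun^[k + 1] x ∈ frontier f.Per := by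
  have hδ : ∀ t, delta F g x t = 0 ↔ ((F t).canon ∘ g.canon)^[g.q] x = x + g.p := fun t => by
    rw [delta, sub_sub, sub_eq_zero]
  simp_rw [HomeoZR.mem_Per_iff_canon hg, ← g.canon_iterate_mem_iff f.add_int_mem_frontier_Per_iff]
  constructor
  · intro hx
    have h0 : g.canon^[g.q] x = x + g.p := by
      simpa [hF.canon_zero] using (hδ 0).1 (hx 0)
    refine ⟨h0, fun k hk => hF.mem_frontier_of_isFixedPt one_pos ?_⟩
    exact isFixedPt_of_iterate_comp_eq g.canon_strictMono (hF.le_canon one_pos)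
      (((hδ 1).1 (hx 1)).trans h0.symm) k hk
  · rintro ⟨h0, hfr⟩ t
    rw [hδ, iterate_comp_eq_of_isFixedPt fun k hk => hF.isFixedPt_canon t (hfr k hk)]
    exact h0

end PosFamily

theorem persistent_periodic_points_general (f g : HomeoZR)
    (hg : RatRot g)
    (F : ℝ → HomeoZR) (hF : PosFamily f F) :
    (Pset F g = g.Per ∩ ⋂ k ∈ Finset.range g.q, g.toFun^[k] '' frontier f.Per) ∧
    ((∃ m : ℤ, f.transNum = (m : ℝ)) → ∀ x ∈ Pset F g, FiniteOrbit f g x) := by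
  have hS := f.add_int_mem_frontier_Per_iff
  have hq := (g.q_spec hg).1
  constructor
  · ext x
    simp only [hF.mem_Pset_iff hg, mem_inter_iff, mem_iInter₂, Finset.mem_range]
    exact and_congr_right fun hx =>
      g.forall_iterate_succ_mem_iff_forall_mem_image hS (g.iterate_q_of_mem_Per hg hx)
  · rintro ⟨m, hm⟩ x hx
    obtain ⟨hx, hfr⟩ := (hF.mem_Pset_iff hg).1 hx
    have hM := g.iterate_q_of_mem_Per hg hx
    rw [forall_iterate_succ_mem_iff hS hM] at hfr
    exact f.finiteOrbit_of_iterate_eq_add g hq hM fun k hk =>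
      HomeoZR.frontier_Per_subset_FixS hm (hfr k hk)

/-- Lemma 2.5 (1). `P(f,g) = Per(g) ∩ ⋂_{k<q(g)} g^k(∂Per f)`; in
particular if `rot(f) = 0` then every element of `P(f,g)` has finite orbit under
`⟨f,g⟩`. -/
theorem persistent_periodic_points (f g : HomeoZR)
    (hf : RatRot f) (hg : RatRot g)
    (F : ℝ → HomeoZR) (hF : PosFamily f F)
    (hconst : ∀ t : ℝ, ∃ m : ℤ, ((F t).comp g).transNum = g.transNum + m) :
    (Pset F g = g.Per ∩ ⋂ k ∈ Finset.range g.q, g.toFun^[k] '' frontier f.Per) ∧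
    ((∃ m : ℤ, f.transNum = (m : ℝ)) → ∀ x ∈ Pset F g, FiniteOrbit f g x) :=
  persistent_periodic_points_general f g hg F hF
end
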